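/- arXiv:1508.06933 — 3 statements merged into one kernel-verified Lean document; each statement's English description precedes it below -/
import Mathlib

section
/- For 1/2 ≤ p < 1 and λ ≥ 0, the Bernoulli(p) random variable satisfies ln((1-p)e^{-λp} + p e^{λ(1-p)}) ≤ p(1-p)λ²/2. -/
/-!
Factoring out `e^{-λp}`, the left side is `log (1 - p + p e^λ) - pλ`. Both sides vanish at
`λ = 0`, so it suffices to compare derivatives: the left one is
`p(1-p)(e^λ - 1) / (1 - p + p e^λ)`, and for `p ≥ 1/2` the denominator is at least
`(1 + e^λ)/2`, which reduces the claim to `tanh (λ/2) ≤ λ/2`, i.e.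
`e^λ - 1 ≤ λ (e^λ + 1)/2`.
-/

open Real Set

theorem le_of_hasDerivAt_le_of_le {f g f' g' : ℝ → ℝ} {a b : ℝ} (hab : a ≤ b)
    (hf : ∀ x, HasDerivAt f (f' x) x) (hg : ∀ x, HasDerivAt g (g' x) x) (ha : f a ≤ g a)
    (hderiv : ∀ x ∈ Ico a b, f' x ≤ g' x) : f b ≤ g b :=
  image_le_of_deriv_right_le_deriv_boundary
    (fun x _ => (hf x).continuousAt.continuousWithinAt) (fun x _ => (hf x).hasDerivWithinAt) ha
    (fun x _ => (hg x).continuousAt.continuousWithinAt) (fun x _ => (hg x).hasDerivWithinAt)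
    hderiv (right_mem_Icc.2 hab)

theorem Real.exp_sub_one_le_mul_exp_add_one_div_two {x : ℝ} (hx : 0 ≤ x) :
    exp x - 1 ≤ x * (exp x + 1) / 2 := by
  have hderiv (y : ℝ) : HasDerivAt (fun y => y * (exp y + 1) / 2)
      ((exp y + 1 + y * exp y) / 2) y :=
    (((hasDerivAt_id' y).mul ((hasDerivAt_exp y).add_const 1)).div_const 2).congr_deriv (by ring)
  refine le_of_hasDerivAt_le_of_le hx (fun y => (hasDerivAt_exp y).sub_const 1) hderiv
    (by simp) fun y _ => ?_
  have : exp y * (1 - y) ≤ 1 := by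
    calc exp y * (1 - y) ≤ exp y * exp (-y) := by gcongr; linarith [add_one_le_exp (-y)]
      _ = 1 := by rw [← exp_add, add_neg_cancel, exp_zero]
  linarith

theorem Real.exp_sub_one_le_mul_one_sub_add_mul_exp {p x : ℝ} (hp : 1 / 2 ≤ p) (hx : 0 ≤ x) :
    exp x - 1 ≤ x * (1 - p + p * exp x) := by
  have hexp : 1 ≤ exp x := one_le_exp hx
  calc exp x - 1 ≤ x * (exp x + 1) / 2 := exp_sub_one_le_mul_exp_add_one_div_two hx
    _ ≤ x * (1 - p + p * exp x) := by
      nlinarith [mul_nonneg hx (mul_nonneg (sub_nonneg.2 hp) (sub_nonneg.2 hexp))]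

section

variable {p : ℝ}

theorem one_sub_add_mul_exp_pos (hp0 : 0 < p) (hp1 : p ≤ 1) (x : ℝ) :
    0 < 1 - p + p * exp x :=
  add_pos_of_nonneg_of_pos (sub_nonneg.2 hp1) (mul_pos hp0 (exp_pos x))

theorem hasDerivAt_log_one_sub_add_mul_exp_sub (hp0 : 0 < p) (hp1 : p ≤ 1) (x : ℝ) :
    HasDerivAt (fun x => log (1 - p + p * exp x) - p * x)
      (p * (1 - p) * (exp x - 1) / (1 - p + p * exp x)) x := by
  have hD := (one_sub_add_mul_exp_pos hp0 hp1 x).ne'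
  refine (((((hasDerivAt_exp x).const_mul p).const_add (1 - p)).log hD).sub
    ((hasDerivAt_id' x).const_mul p)).congr_deriv ?_
  field_simp
  ring

theorem log_one_sub_add_mul_exp_sub_le (hp : 1 / 2 ≤ p) (hp1 : p ≤ 1) {x : ℝ} (hx : 0 ≤ x) :
    log (1 - p + p * exp x) - p * x ≤ p * (1 - p) * x ^ 2 / 2 := by
  have hp0 : 0 < p := by linarith
  have hsq (y : ℝ) : HasDerivAt (fun y => p * (1 - p) * y ^ 2 / 2) (p * (1 - p) * y) y :=
    (((hasDerivAt_pow 2 y).const_mul (p * (1 - p))).div_const 2).congr_deriv (by ring)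
  refine le_of_hasDerivAt_le_of_le hx (hasDerivAt_log_one_sub_add_mul_exp_sub hp0 hp1) hsq
    (by simp) fun y hy => ?_
  rw [mul_div_assoc]
  refine mul_le_mul_of_nonneg_left ?_ (mul_nonneg hp0.le (sub_nonneg.2 hp1))
  rw [div_le_iff₀ (one_sub_add_mul_exp_pos hp0 hp1 y)]
  exact exp_sub_one_le_mul_one_sub_add_mul_exp hp hy.1

end

theorem berend_kontorovich (p l : ℝ) (hp1 : 1 / 2 ≤ p) (hp2 : p < 1) (hl : 0 ≤ l) :
    Real.log ((1 - p) * Real.exp (-l * p) + p * Real.exp (l * (1 - p)))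
      ≤ p * (1 - p) * l ^ 2 / 2 := by
  have hfactor : (1 - p) * exp (-l * p) + p * exp (l * (1 - p))
      = exp (-l * p) * (1 - p + p * exp l) := by
    rw [show l * (1 - p) = -l * p + l by ring, exp_add]
    ring
  rw [hfactor, log_mul (exp_pos _).ne' (one_sub_add_mul_exp_pos (by linarith) hp2.le l).ne',
    log_exp]
  linarith [log_one_sub_add_mul_exp_sub_le hp1 hp2.le hl]
end

section
/- Let f : [0,1] → ℝ be continuous with modulus of continuity ω[f](δ) = sup{|f(s)-f(t)| : s,t ∈ [0,1], |s-t| ≤ δ}, and let Bₙ[f](x) = Σ_{m=0}^n C(n,m) f(m/n) x^m (1-x)^{n-m}. Then for every x ∈ (0,1) and n ≥ 1, |Bₙ[f](x) - f(x)| ≤ 2 ∫₀^∞ ω[f](z·√(x(1-x))/√n) · z · e^{-z²/2} dz. -/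
/-!
Write `ω = modCont f` and `σ = √(x(1-x)/n)`. Subadditivity of `ω` gives
`ω d ≤ (1 + d²/δ²) ω δ`; averaged over the Bernstein weights, whose variance about `x` is `σ²`,
this yields `|Bₙ f x - f x| ≤ (1 + 1/z²) ω (zσ)` for every `z > 0`. Hence
`ω (zσ) ≥ |Bₙ f x - f x| z²/(1+z²)`, and integrating against `z e^{-z²/2} dz` reduces the theorem
to `∫₀^∞ z e^{-z²/2}/(1+z²) dz ≤ 1/2` (the integral is `≈ 0.4615`). That bound follows from
replacing `1/(1+z²)`, a convex function of `z²`, by its chords over `z ∈ [0,1], [1,√2], [√2,2]`,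
and by `1/5` for `z > 2`.
-/

open Real Finset MeasureTheory

noncomputable def bernsteinPoly (n : ℕ) (f : ℝ → ℝ) (x : ℝ) : ℝ :=
  ∑ m ∈ Finset.range (n + 1),
    (n.choose m : ℝ) * f ((m : ℝ) / n) * x ^ m * (1 - x) ^ (n - m)

noncomputable def modCont (f : ℝ → ℝ) (δ : ℝ) : ℝ :=
  sSup {d | ∃ s ∈ Set.Icc (0 : ℝ) 1, ∃ t ∈ Set.Icc (0 : ℝ) 1,
    |s - t| ≤ δ ∧ d = |f s - f t|}

open Set Filter

section ModulusOfContinuity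

variable {f : ℝ → ℝ} {M : ℝ}

theorem modCont_nonneg (f : ℝ → ℝ) (δ : ℝ) : 0 ≤ modCont f δ :=
  Real.sSup_nonneg fun _ ⟨_, _, _, _, _, hd⟩ => hd ▸ abs_nonneg _

theorem modCont_le {δ C : ℝ} (hC : 0 ≤ C)
    (h : ∀ s ∈ Icc (0 : ℝ) 1, ∀ t ∈ Icc (0 : ℝ) 1, |s - t| ≤ δ → |f s - f t| ≤ C) :
    modCont f δ ≤ C :=
  Real.sSup_le (fun _ ⟨s, hs, t, ht, hst, hd⟩ => hd ▸ h s hs t ht hst) hC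

theorem abs_sub_le_two_mul (hM : ∀ y ∈ Icc (0 : ℝ) 1, |f y| ≤ M) {s t : ℝ}
    (hs : s ∈ Icc (0 : ℝ) 1) (ht : t ∈ Icc (0 : ℝ) 1) : |f s - f t| ≤ 2 * M :=
  (abs_sub_le (f s) 0 (f t)).trans <| by
    simp only [sub_zero, zero_sub, abs_neg]
    linarith [hM s hs, hM t ht]

theorem abs_sub_le_modCont (hM : ∀ y ∈ Icc (0 : ℝ) 1, |f y| ≤ M) {s t δ : ℝ}
    (hs : s ∈ Icc (0 : ℝ) 1) (ht : t ∈ Icc (0 : ℝ) 1) (hst : |s - t| ≤ δ) :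
    |f s - f t| ≤ modCont f δ :=
  le_csSup ⟨2 * M, fun _ ⟨_, hs, _, ht, _, hd⟩ => hd ▸ abs_sub_le_two_mul hM hs ht⟩
    ⟨s, hs, t, ht, hst, rfl⟩

theorem modCont_le_two_mul (hM : ∀ y ∈ Icc (0 : ℝ) 1, |f y| ≤ M) (δ : ℝ) :
    modCont f δ ≤ 2 * M :=
  modCont_le (by linarith [abs_nonneg (f 0), hM 0 (left_mem_Icc.2 zero_le_one)])
    fun _ hs _ ht _ => abs_sub_le_two_mul hM hs ht

theorem modCont_mono (hM : ∀ y ∈ Icc (0 : ℝ) 1, |f y| ≤ M) : Monotone (modCont f) :=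
  fun _ _ hab => modCont_le (modCont_nonneg f _) fun _ hs _ ht hst =>
    abs_sub_le_modCont hM hs ht (hst.trans hab)

theorem modCont_add_le (hM : ∀ y ∈ Icc (0 : ℝ) 1, |f y| ≤ M) {a b : ℝ} (ha : 0 ≤ a)
    (hb : 0 ≤ b) : modCont f (a + b) ≤ modCont f a + modCont f b := by
  refine modCont_le (add_nonneg (modCont_nonneg f a) (modCont_nonneg f b))
    fun s hs t ht hst => ?_
  -- the point of `[s - a, s + a]` closest to `t` splits `[s, t]` into steps `≤ a` and `≤ b`
  set u := max (s - a) (min (s + a) t)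
  obtain ⟨hu, hsu, hut⟩ : u ∈ Icc (0 : ℝ) 1 ∧ |s - u| ≤ a ∧ |u - t| ≤ b := by
    simp only [Set.mem_Icc, abs_le] at hs ht hst ⊢
    grind
  calc |f s - f t| ≤ |f s - f u| + |f u - f t| := abs_sub_le _ _ _
    _ ≤ modCont f a + modCont f b :=
      add_le_add (abs_sub_le_modCont hM hs hu hsu) (abs_sub_le_modCont hM hu ht hut)

theorem modCont_natCast_mul_le (hM : ∀ y ∈ Icc (0 : ℝ) 1, |f y| ≤ M) {δ : ℝ} (hδ : 0 ≤ δ)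
    (k : ℕ) : modCont f (k * δ) ≤ k * modCont f δ := by
  induction k with
  | zero =>
    simp only [Nat.cast_zero, zero_mul]
    refine modCont_le le_rfl fun s _ t _ hst => ?_
    rw [sub_eq_zero.1 (abs_nonpos_iff.1 hst), sub_self, abs_zero]
  | succ k ih =>
    calc modCont f ((k + 1 : ℕ) * δ) = modCont f (k * δ + δ) := by push_cast; ring_nf
      _ ≤ modCont f (k * δ) + modCont f δ := modCont_add_le hM (by positivity) hδ
      _ ≤ (k + 1 : ℕ) * modCont f δ := by push_cast; linarith

theorem modCont_le_one_add_sq_div_mul (hM : ∀ y ∈ Icc (0 : ℝ) 1, |f y| ≤ M) {d δ : ℝ}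
    (hd : 0 ≤ d) (hδ : 0 < δ) : modCont f d ≤ (1 + d ^ 2 / δ ^ 2) * modCont f δ := by
  set k := ⌈d / δ⌉₊
  have hk : (k : ℝ) ≤ 1 + d ^ 2 / δ ^ 2 := by
    rcases le_or_gt (d / δ) 1 with h | h
    · have : k ≤ 1 := Nat.ceil_le.2 (by exact_mod_cast h)
      have : (k : ℝ) ≤ 1 := by exact_mod_cast this
      linarith [div_nonneg (sq_nonneg d) (sq_nonneg δ)]
    · have := Nat.ceil_lt_add_one (div_nonneg hd hδ.le)
      rw [← div_pow]
      nlinarith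
  calc modCont f d ≤ modCont f (k * δ) :=
        modCont_mono hM ((div_le_iff₀ hδ).1 (Nat.le_ceil (d / δ)))
    _ ≤ k * modCont f δ := modCont_natCast_mul_le hM hδ.le k
    _ ≤ (1 + d ^ 2 / δ ^ 2) * modCont f δ :=
      mul_le_mul_of_nonneg_right hk (modCont_nonneg f δ)

end ModulusOfContinuity

theorem bernsteinPoly_eq_sum_eval (n : ℕ) (f : ℝ → ℝ) (x : ℝ) :
    bernsteinPoly n f x
      = ∑ m ∈ range (n + 1), (bernsteinPolynomial ℝ n m).eval x * f (m / n) := by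
  refine sum_congr rfl fun m _ => ?_
  simp only [bernsteinPolynomial, Polynomial.eval_mul, Polynomial.eval_pow, Polynomial.eval_sub,
    Polynomial.eval_natCast, Polynomial.eval_X, Polynomial.eval_one]
  ring

theorem sum_eval_bernsteinPolynomial (n : ℕ) (x : ℝ) :
    ∑ m ∈ range (n + 1), (bernsteinPolynomial ℝ n m).eval x = 1 := by
  simpa [Polynomial.eval_finsetSum] using
    congr_arg (Polynomial.eval x) (bernsteinPolynomial.sum ℝ n)

theorem sum_sq_mul_eval_bernsteinPolynomial {n : ℕ} (hn : n ≠ 0) (x : ℝ) :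
    ∑ m ∈ range (n + 1), ((m : ℝ) / n - x) ^ 2 * (bernsteinPolynomial ℝ n m).eval x
      = x * (1 - x) / n := by
  have h := congr_arg (Polynomial.eval x) (bernsteinPolynomial.variance ℝ n)
  simp only [Polynomial.eval_finsetSum, Polynomial.eval_mul, Polynomial.eval_pow,
    Polynomial.eval_sub, Polynomial.eval_X, Polynomial.eval_natCast, Polynomial.eval_one,
    nsmul_eq_mul] at h
  have hn' : (n : ℝ) ≠ 0 := by exact_mod_cast hn
  calc _ = ∑ m ∈ range (n + 1),
          ((n : ℝ) * x - m) ^ 2 * (bernsteinPolynomial ℝ n m).eval x / n ^ 2 := by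
        refine sum_congr rfl fun m _ => ?_
        field_simp
        ring
    _ = x * (1 - x) / n := by
        rw [← sum_div, h]
        field_simp

theorem eval_bernsteinPolynomial_nonneg (n m : ℕ) {x : ℝ} (hx : x ∈ Icc (0 : ℝ) 1) :
    0 ≤ (bernsteinPolynomial ℝ n m).eval x := by
  have : 0 ≤ 1 - x := sub_nonneg.2 hx.2
  have := hx.1
  simp only [bernsteinPolynomial, Polynomial.eval_mul, Polynomial.eval_pow, Polynomial.eval_sub,
    Polynomial.eval_natCast, Polynomial.eval_X, Polynomial.eval_one]
  positivity

theorem natCast_div_mem_Icc {n m : ℕ} (hm : m ∈ range (n + 1)) :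
    (m / n : ℝ) ∈ Icc (0 : ℝ) 1 :=
  ⟨by positivity, div_le_one_of_le₀ (by exact_mod_cast Nat.lt_succ_iff.1 (mem_range.1 hm))
    n.cast_nonneg⟩

theorem abs_bernsteinPoly_sub_le {f : ℝ → ℝ} {M : ℝ} (hM : ∀ y ∈ Icc (0 : ℝ) 1, |f y| ≤ M)
    {n : ℕ} (hn : n ≠ 0) {x δ : ℝ} (hx : x ∈ Icc (0 : ℝ) 1) (hδ : 0 < δ) :
    |bernsteinPoly n f x - f x| ≤ (1 + x * (1 - x) / (n * δ ^ 2)) * modCont f δ := by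
  set b := fun m : ℕ => (bernsteinPolynomial ℝ n m).eval x
  have hb : ∀ m, 0 ≤ b m := fun m => eval_bernsteinPolynomial_nonneg n m hx
  have hsub : bernsteinPoly n f x - f x = ∑ m ∈ range (n + 1), b m * (f (m / n) - f x) := by
    simp only [bernsteinPoly_eq_sum_eval, mul_sub, sum_sub_distrib, ← sum_mul,
      sum_eval_bernsteinPolynomial, one_mul, b]
  calc |bernsteinPoly n f x - f x|
      ≤ ∑ m ∈ range (n + 1), b m * modCont f |(m : ℝ) / n - x| := by
        rw [hsub]
        refine (abs_sum_le_sum_abs _ _).trans (sum_le_sum fun m hm => ?_)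
        rw [abs_mul, abs_of_nonneg (hb m)]
        exact mul_le_mul_of_nonneg_left
          (abs_sub_le_modCont hM (natCast_div_mem_Icc hm) hx le_rfl) (hb m)
    _ ≤ ∑ m ∈ range (n + 1), (b m * modCont f δ
          + ((m : ℝ) / n - x) ^ 2 * b m * (modCont f δ / δ ^ 2)) := by
        refine sum_le_sum fun m _ => (mul_le_mul_of_nonneg_left
          (modCont_le_one_add_sq_div_mul hM (abs_nonneg _) hδ) (hb m)).trans_eq ?_
        rw [sq_abs]
        ring
    _ = (1 + x * (1 - x) / (n * δ ^ 2)) * modCont f δ := by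
        rw [sum_add_distrib, ← sum_mul, ← sum_mul, sum_eval_bernsteinPolynomial,
          sum_sq_mul_eval_bernsteinPolynomial hn]
        field_simp

theorem hasDerivAt_exp_neg_sq_div_two (z : ℝ) :
    HasDerivAt (fun z : ℝ => exp (-z ^ 2 / 2)) (-z * exp (-z ^ 2 / 2)) z :=
  ((hasDerivAt_pow 2 z).neg.div_const 2).exp.congr_deriv (by simp only [Pi.neg_apply]; ring)

theorem integrable_mul_exp_neg_sq_div_two : Integrable fun z : ℝ => z * exp (-z ^ 2 / 2) :=
  (integrable_mul_exp_neg_mul_sq (b := 1 / 2) (by norm_num)).congr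
    (ae_of_all _ fun z => by ring_nf)

theorem integral_Ioi_mul_exp_neg_sq_div_two (a : ℝ) :
    ∫ z in Ioi a, z * exp (-z ^ 2 / 2) = exp (-a ^ 2 / 2) := by
  have hderiv (z : ℝ) :
      HasDerivAt (fun z : ℝ => -exp (-z ^ 2 / 2)) (z * exp (-z ^ 2 / 2)) z :=
    (hasDerivAt_exp_neg_sq_div_two z).neg.congr_deriv (by ring)
  have hlim : Tendsto (fun z : ℝ => -exp (-z ^ 2 / 2)) atTop (nhds (-0)) := by
    refine (tendsto_exp_atBot.comp ?_).neg
    exact ((tendsto_pow_atTop two_ne_zero).atTop_mul_const_of_neg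
      (show (-(1 / 2) : ℝ) < 0 by norm_num)).congr fun z => by ring
  rw [integral_Ioi_of_hasDerivAt_of_tendsto' (fun z _ => hderiv z)
    integrable_mul_exp_neg_sq_div_two.integrableOn hlim]
  ring

theorem integral_mul_sub_sq_mul_exp_neg_sq_div_two (a b c : ℝ) :
    ∫ z in a..b, z * (c - z ^ 2) * exp (-z ^ 2 / 2)
      = (b ^ 2 + 2 - c) * exp (-b ^ 2 / 2) - (a ^ 2 + 2 - c) * exp (-a ^ 2 / 2) := by
  refine intervalIntegral.integral_eq_sub_of_hasDerivAt
    (f := fun z => (z ^ 2 + 2 - c) * exp (-z ^ 2 / 2))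
    (f' := fun z => z * (c - z ^ 2) * exp (-z ^ 2 / 2)) (fun z _ => ?_)
    (Continuous.intervalIntegrable (by fun_prop) _ _)
  refine ((((hasDerivAt_pow 2 z).add_const 2).sub_const c).mul
    (hasDerivAt_exp_neg_sq_div_two z)).congr_deriv ?_
  push_cast
  ring

theorem integrable_mul_mul_exp_neg_sq_div_two {w : ℝ → ℝ} {C : ℝ}
    (hw : AEStronglyMeasurable w) (hC : ∀ z, |w z| ≤ C) :
    Integrable fun z => w z * z * exp (-z ^ 2 / 2) := by
  simpa only [mul_assoc] using
    integrable_mul_exp_neg_sq_div_two.bdd_mul hw (ae_of_all _ hC)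

theorem integrable_mul_exp_neg_sq_div_two_div_one_add_sq :
    Integrable fun z : ℝ => z * exp (-z ^ 2 / 2) / (1 + z ^ 2) := by
  have : Integrable fun z : ℝ => z * exp (-z ^ 2 / 2) * (1 + z ^ 2)⁻¹ :=
    integrable_mul_exp_neg_sq_div_two.mul_bdd (c := 1)
      (by fun_prop : Measurable fun z : ℝ => (1 + z ^ 2)⁻¹).aestronglyMeasurable
      (ae_of_all _ fun z => by
        rw [norm_inv, Real.norm_of_nonneg (by positivity)]
        exact inv_le_one_of_one_le₀ (by nlinarith [sq_nonneg z]))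
  simpa only [div_eq_mul_inv] using this

theorem inv_one_add_le_chord {a b s : ℝ} (ha : 0 ≤ a) (has : a ≤ s) (hsb : s ≤ b) :
    (1 + s)⁻¹ ≤ (1 + a + b - s) / ((1 + a) * (1 + b)) := by
  have hb : 0 ≤ b := ha.trans (has.trans hsb)
  rw [inv_eq_one_div, div_le_div_iff₀ (by linarith) (by positivity)]
  nlinarith [mul_nonneg (sub_nonneg.2 has) (sub_nonneg.2 hsb)]

theorem integral_mul_exp_neg_sq_div_two_div_one_add_sq_le {α β : ℝ} (hα : 0 ≤ α)
    (hαβ : α ≤ β) :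
    ∫ z in α..β, z * exp (-z ^ 2 / 2) / (1 + z ^ 2)
      ≤ ((1 - α ^ 2) * exp (-β ^ 2 / 2) - (1 - β ^ 2) * exp (-α ^ 2 / 2))
        / ((1 + α ^ 2) * (1 + β ^ 2)) :=
  calc ∫ z in α..β, z * exp (-z ^ 2 / 2) / (1 + z ^ 2)
      ≤ ∫ z in α..β, z * (1 + α ^ 2 + β ^ 2 - z ^ 2) * exp (-z ^ 2 / 2)
          / ((1 + α ^ 2) * (1 + β ^ 2)) := by
        refine intervalIntegral.integral_mono_on hαβ
          integrable_mul_exp_neg_sq_div_two_div_one_add_sq.intervalIntegrable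
          (Continuous.intervalIntegrable (by fun_prop) _ _) fun z hz => ?_
        have hz0 : 0 ≤ z := hα.trans hz.1
        calc z * exp (-z ^ 2 / 2) / (1 + z ^ 2) = z * exp (-z ^ 2 / 2) * (1 + z ^ 2)⁻¹ :=
              div_eq_mul_inv _ _
          _ ≤ z * exp (-z ^ 2 / 2)
                * ((1 + α ^ 2 + β ^ 2 - z ^ 2) / ((1 + α ^ 2) * (1 + β ^ 2))) :=
              mul_le_mul_of_nonneg_left (inv_one_add_le_chord (sq_nonneg α)
                (pow_le_pow_left₀ hα hz.1 2) (pow_le_pow_left₀ hz0 hz.2 2)) (by positivity)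
          _ = _ := by ring
    _ = _ := by
        rw [intervalIntegral.integral_div, integral_mul_sub_sq_mul_exp_neg_sq_div_two]
        ring

theorem integral_Ioi_mul_exp_neg_sq_div_two_div_one_add_sq_le {β : ℝ} (hβ : 0 ≤ β) :
    ∫ z in Ioi β, z * exp (-z ^ 2 / 2) / (1 + z ^ 2) ≤ exp (-β ^ 2 / 2) / (1 + β ^ 2) :=
  calc ∫ z in Ioi β, z * exp (-z ^ 2 / 2) / (1 + z ^ 2)
      ≤ ∫ z in Ioi β, z * exp (-z ^ 2 / 2) / (1 + β ^ 2) := by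
        refine setIntegral_mono_on integrable_mul_exp_neg_sq_div_two_div_one_add_sq.integrableOn
          (integrable_mul_exp_neg_sq_div_two.div_const _).integrableOn measurableSet_Ioi
          fun z hz => ?_
        have hz : β < z := hz
        exact div_le_div_of_nonneg_left (by have := hβ.trans hz.le; positivity) (by positivity)
          (by nlinarith)
    _ = exp (-β ^ 2 / 2) / (1 + β ^ 2) := by
        rw [integral_div, integral_Ioi_mul_exp_neg_sq_div_two]

theorem integral_Ioi_mul_exp_neg_sq_div_two_div_one_add_sq_le_half :
    ∫ z in Ioi 0, z * exp (-z ^ 2 / 2) / (1 + z ^ 2) ≤ 1 / 2 := by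
  have hg := integrable_mul_exp_neg_sq_div_two_div_one_add_sq
  have h2 : √2 ^ 2 = 2 := Real.sq_sqrt zero_le_two
  have h1 : 1 ≤ √2 := Real.one_le_sqrt.2 one_le_two
  have h2' : √2 ≤ 2 := by nlinarith
  rw [← intervalIntegral.integral_interval_add_Ioi hg.integrableOn hg.integrableOn (b := 2),
    ← intervalIntegral.integral_add_adjacent_intervals (b := √2) hg.intervalIntegrable
      hg.intervalIntegrable,
    ← intervalIntegral.integral_add_adjacent_intervals (b := 1) hg.intervalIntegrable
      hg.intervalIntegrable]
  have p1 := integral_mul_exp_neg_sq_div_two_div_one_add_sq_le le_rfl zero_le_one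
  have p2 := integral_mul_exp_neg_sq_div_two_div_one_add_sq_le zero_le_one h1
  have p3 := integral_mul_exp_neg_sq_div_two_div_one_add_sq_le (zero_le_one.trans h1) h2'
  have p4 := integral_Ioi_mul_exp_neg_sq_div_two_div_one_add_sq_le zero_le_two
  rw [h2] at p2 p3
  norm_num at p1 p2 p3 p4
  -- the four bounds add up to `2/3 e^{-1/2} + e^{-1}/5 + 2/15 e^{-2} ≈ 0.496`
  set u := exp (-(1 / 2))
  have hu : 0 < u := exp_pos _
  have e1 : exp (-1) = u ^ 2 := by rw [← exp_nat_mul]; norm_num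
  have e2 : exp (-2) = u ^ 4 := by rw [← exp_nat_mul]; norm_num
  rw [e2, e1] at p3
  rw [e2] at p4
  have hu2 : u ^ 2 < 0.3678794412 := e1 ▸ exp_neg_one_lt_d9
  nlinarith [pow_le_pow_left₀ (sq_nonneg u) hu2.le 2]

theorem le_two_mul_integral_of_le_one_add_inv_sq_mul {w : ℝ → ℝ} {L : ℝ} (hL : 0 ≤ L)
    (hw : IntegrableOn (fun z => w z * z * exp (-z ^ 2 / 2)) (Ioi 0))
    (hLw : ∀ z > 0, L ≤ (1 + 1 / z ^ 2) * w z) :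
    L ≤ 2 * ∫ z in Ioi 0, w z * z * exp (-z ^ 2 / 2) := by
  have hpoint : ∀ z ∈ Ioi (0 : ℝ),
      L * (z * exp (-z ^ 2 / 2) - z * exp (-z ^ 2 / 2) / (1 + z ^ 2))
        ≤ w z * z * exp (-z ^ 2 / 2) := by
    intro z (hz : 0 < z)
    have hLz : L * z ^ 2 ≤ w z * (1 + z ^ 2) :=
      calc L * z ^ 2 ≤ (1 + 1 / z ^ 2) * w z * z ^ 2 :=
            mul_le_mul_of_nonneg_right (hLw z hz) (sq_nonneg z)
        _ = w z * (1 + z ^ 2) := by field_simp; ring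
    calc L * (z * exp (-z ^ 2 / 2) - z * exp (-z ^ 2 / 2) / (1 + z ^ 2))
        = L * z ^ 2 * (z * exp (-z ^ 2 / 2)) / (1 + z ^ 2) := by field_simp; ring
      _ ≤ w z * (1 + z ^ 2) * (z * exp (-z ^ 2 / 2)) / (1 + z ^ 2) := by gcongr
      _ = w z * z * exp (-z ^ 2 / 2) := by field_simp
  calc L ≤ 2 * (L * (1 - ∫ z in Ioi 0, z * exp (-z ^ 2 / 2) / (1 + z ^ 2))) := by
        nlinarith [integral_Ioi_mul_exp_neg_sq_div_two_div_one_add_sq_le_half]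
    _ = 2 * ∫ z in Ioi 0,
          L * (z * exp (-z ^ 2 / 2) - z * exp (-z ^ 2 / 2) / (1 + z ^ 2)) := by
        rw [integral_const_mul, integral_sub integrable_mul_exp_neg_sq_div_two.integrableOn
          integrable_mul_exp_neg_sq_div_two_div_one_add_sq.integrableOn,
          integral_Ioi_mul_exp_neg_sq_div_two]
        norm_num
    _ ≤ 2 * ∫ z in Ioi 0, w z * z * exp (-z ^ 2 / 2) := by
        refine mul_le_mul_of_nonneg_left (setIntegral_mono_on ?_ hw measurableSet_Ioi hpoint)
          zero_le_two
        exact (integrable_mul_exp_neg_sq_div_two.sub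
          integrable_mul_exp_neg_sq_div_two_div_one_add_sq).integrableOn.const_mul L

theorem bernstein_nonuniform_error_bound
    (f : ℝ → ℝ) (hf : ContinuousOn f (Set.Icc (0 : ℝ) 1))
    (x : ℝ) (hx : x ∈ Set.Ioo (0 : ℝ) 1) (n : ℕ) (hn : 1 ≤ n) :
    |bernsteinPoly n f x - f x|
      ≤ 2 * ∫ z in Set.Ioi (0 : ℝ),
          modCont f (z * Real.sqrt (x * (1 - x)) / Real.sqrt n) * z *
            Real.exp (-z ^ 2 / 2) := by
  obtain ⟨M, hM⟩ := isCompact_Icc.exists_bound_of_continuousOn hf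
  simp only [Real.norm_eq_abs] at hM
  have hvar : 0 < x * (1 - x) := mul_pos hx.1 (sub_pos.2 hx.2)
  have hn' : (0 : ℝ) < n := by exact_mod_cast hn
  have hscale : Monotone fun z : ℝ => z * √(x * (1 - x)) / √n := fun a b hab => by
    dsimp only
    gcongr
  have hint : IntegrableOn (fun z => modCont f (z * √(x * (1 - x)) / √n) * z * exp (-z ^ 2 / 2))
      (Ioi 0) :=
    (integrable_mul_mul_exp_neg_sq_div_two (C := 2 * M)
      ((modCont_mono hM).comp hscale).measurable.aestronglyMeasurable fun _ =>
        (abs_of_nonneg (modCont_nonneg _ _)).trans_le (modCont_le_two_mul hM _)).integrableOn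
  refine le_two_mul_integral_of_le_one_add_inv_sq_mul (abs_nonneg _) hint fun z hz => ?_
  have hδ : 0 < z * √(x * (1 - x)) / √n := by positivity
  calc |bernsteinPoly n f x - f x|
      ≤ (1 + x * (1 - x) / (n * (z * √(x * (1 - x)) / √n) ^ 2))
          * modCont f (z * √(x * (1 - x)) / √n) :=
        abs_bernsteinPoly_sub_le hM (by omega) (Ioo_subset_Icc_self hx) hδ
    _ = (1 + 1 / z ^ 2) * modCont f (z * √(x * (1 - x)) / √n) := by
        rw [div_pow, mul_pow, sq_sqrt hvar.le, sq_sqrt hn'.le]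
        field_simp [hx.1.ne', (sub_pos.2 hx.2).ne']
end

section
/- Let f : [0,1] → ℝ be Lipschitz with constant L: |f(s)-f(t)| ≤ L|s-t|. Then for every x ∈ (0,1) and n ≥ 1, |Bₙ[f](x) - f(x)| ≤ 2L√(2π x(1-x)/n). -/
open Real Finset

/-! The error `Bₙ[f](x) - f(x)` is the average of `f(k/n) - f(x)` against the Bernstein weights,
a probability distribution on the nodes `k/n` with mean `x` and variance `x(1-x)/n`. The Lipschitz
bound and Cauchy–Schwarz give `|Bₙ[f](x) - f(x)| ≤ L √(x(1-x)/n)`, which is smaller than the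
claimed bound by the factor `2√(2π)`. -/

section WeightedAverage

variable {ι : Type*} (s : Finset ι) {w : ι → ℝ}

theorem sum_mul_abs_le_sqrt_sum_sq_mul (a : ι → ℝ) (hw : ∀ i ∈ s, 0 ≤ w i)
    (hw_sum : ∑ i ∈ s, w i = 1) :
    ∑ i ∈ s, w i * |a i| ≤ √(∑ i ∈ s, a i ^ 2 * w i) := by
  refine Real.le_sqrt_of_sq_le ?_
  have h := sum_sq_le_sum_mul_sum_of_sq_le_mul s hw
    (fun i hi ↦ mul_nonneg (sq_nonneg (a i)) (hw i hi))
    (r := fun i ↦ w i * |a i|) fun i _ ↦ by rw [mul_pow, sq_abs]; exact le_of_eq (by ring)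
  rwa [hw_sum, one_mul] at h

theorem abs_sum_mul_sub_le_mul_sqrt {S : Set ℝ} {f : ℝ → ℝ} {L x : ℝ} (p : ι → ℝ)
    (hL : 0 ≤ L) (hLip : ∀ u ∈ S, ∀ v ∈ S, |f u - f v| ≤ L * |u - v|)
    (hp : ∀ i ∈ s, p i ∈ S) (hx : x ∈ S) (hw : ∀ i ∈ s, 0 ≤ w i)
    (hw_sum : ∑ i ∈ s, w i = 1) :
    |∑ i ∈ s, w i * f (p i) - f x| ≤ L * √(∑ i ∈ s, (x - p i) ^ 2 * w i) := by
  have h_avg : ∑ i ∈ s, w i * f (p i) - f x = ∑ i ∈ s, w i * (f (p i) - f x) := by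
    simp only [mul_sub, sum_sub_distrib, ← sum_mul, hw_sum, one_mul]
  calc |∑ i ∈ s, w i * f (p i) - f x|
      ≤ ∑ i ∈ s, w i * |f (p i) - f x| := by
        rw [h_avg]
        refine (abs_sum_le_sum_abs _ _).trans_eq (sum_congr rfl fun i hi ↦ ?_)
        rw [abs_mul, abs_of_nonneg (hw i hi)]
    _ ≤ ∑ i ∈ s, w i * (L * |x - p i|) := by
        gcongr with i hi
        · exact hw i hi
        · rw [abs_sub_comm x]; exact hLip _ (hp i hi) _ hx
    _ = L * ∑ i ∈ s, w i * |x - p i| := by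
        rw [mul_sum]; exact sum_congr rfl fun i _ ↦ by ring
    _ ≤ L * √(∑ i ∈ s, (x - p i) ^ 2 * w i) := by
        gcongr; exact sum_mul_abs_le_sqrt_sum_sq_mul s _ hw hw_sum

end WeightedAverage

theorem bernsteinPoly_eq_sum_bernstein (n : ℕ) (f : ℝ → ℝ) (x : unitInterval) :
    bernsteinPoly n f x = ∑ k : Fin (n + 1), bernstein n k x * f (bernstein.z k) := by
  rw [bernsteinPoly, ← Fin.sum_univ_eq_sum_range]
  refine sum_congr rfl fun k _ ↦ ?_
  rw [bernstein_apply]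
  simp only [bernstein.z]
  ring

theorem bernstein_lipschitz_error_bound_general
    (f : ℝ → ℝ) (L : ℝ)
    (hLip : ∀ s ∈ Set.Icc (0 : ℝ) 1, ∀ t ∈ Set.Icc (0 : ℝ) 1,
      |f s - f t| ≤ L * |s - t|)
    (x : ℝ) (hx : x ∈ Set.Ioo (0 : ℝ) 1) (n : ℕ) (hn : 1 ≤ n) :
    |bernsteinPoly n f x - f x|
      ≤ 2 * L * Real.sqrt (2 * Real.pi * x * (1 - x) / n) := by
  have hL : 0 ≤ L := (abs_nonneg _).trans (by simpa using hLip 1 (by simp) 0 (by simp))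
  set y : unitInterval := ⟨x, Set.Ioo_subset_Icc_self hx⟩
  have h_var : ∑ k : Fin (n + 1), (x - bernstein.z k) ^ 2 * bernstein n k y = x * (1 - x) / n :=
    bernstein.variance (by omega) y
  have h_err := abs_sum_mul_sub_le_mul_sqrt univ (fun k ↦ (bernstein.z k : ℝ)) hL hLip
    (fun k _ ↦ (bernstein.z k).2) y.2 (fun k _ ↦ bernstein_nonneg) (bernstein.probability n y)
  rw [← bernsteinPoly_eq_sum_bernstein, h_var] at h_err
  have h_var_nonneg : 0 ≤ x * (1 - x) / n := by
    have := sub_pos.2 hx.2; have := hx.1; positivity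
  calc |bernsteinPoly n f x - f x|
      ≤ L * √(x * (1 - x) / n) := h_err
    _ ≤ L * √(2 * π * x * (1 - x) / n) := by
        gcongr L * √?_
        rw [show 2 * π * x * (1 - x) / n = 2 * π * (x * (1 - x) / n) by ring]
        nlinarith [pi_gt_three]
    _ ≤ 2 * L * √(2 * π * x * (1 - x) / n) := by
        gcongr; linarith

theorem bernstein_lipschitz_error_bound
    (f : ℝ → ℝ) (L : ℝ) (hL : 0 ≤ L)
    (hLip : ∀ s ∈ Set.Icc (0 : ℝ) 1, ∀ t ∈ Set.Icc (0 : ℝ) 1,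
      |f s - f t| ≤ L * |s - t|)
    (x : ℝ) (hx : x ∈ Set.Ioo (0 : ℝ) 1) (n : ℕ) (hn : 1 ≤ n) :
    |bernsteinPoly n f x - f x|
      ≤ 2 * L * Real.sqrt (2 * Real.pi * x * (1 - x) / n) :=
  bernstein_lipschitz_error_bound_general f L hLip x hx n hn
end
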